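/- arXiv:1810.12708 — 4 statements merged into one kernel-verified Lean document; each statement's English description precedes it below -/
import Mathlib

section
/- Every set embeds into a flabby set; specifically, the map x ↦ {x} from X to P_{≤1}(X) is an injection into a flabby set. -/
def Subterminal {X : Type*} (K : Set X) : Prop := ∀ x ∈ K, ∀ y ∈ K, x = y

def Flabby (X : Type*) : Prop := ∀ K : Set X, Subterminal K → ∃ x : X, K ⊆ {x}

theorem stmt5 (X : Type u) :
    Function.Injective (fun x : X => (⟨{x}, by intro a ha b hb; simp_all⟩ :
      {K : Set X // Subterminal K})) ∧
    Flabby {K : Set X // Subterminal K} := by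
  constructor
  · intro a b h
    have : ({a} : Set X) = {b} := congrArg Subtype.val h
    simpa using this
  · intro K hK
    rcases K.eq_empty_or_nonempty with h | ⟨k, hk⟩
    · exact ⟨⟨∅, by intro a ha; simp_all⟩, by simp [h]⟩
    · exact ⟨k, fun y hy => hK y hy k hk⟩
end

section
/- If I is an injective set and T is an arbitrary set, then the set I^T of maps from T to I is flabby. -/
theorem stmt7 (I : Type u) (T : Type u)
    (hinj : ∀ (A B : Type u) (i : A → B), Function.Injective i →
      ∀ f : A → I, ∃ g : B → I, g ∘ i = f) :
    Flabby (T → I) := by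
  intro K hK
  set A := {p : (T → I) × T // p.1 ∈ K} with hA
  have hi : Function.Injective (fun p : A => p.1.2) := by
    rintro ⟨⟨f, t⟩, hf⟩ ⟨⟨g, s⟩, hg⟩ h
    simp only at h
    have := hK f hf g hg
    subst this h
    rfl
  obtain ⟨g, hg⟩ := hinj A T (fun p => p.1.2) hi (fun p => p.1.1 p.1.2)
  refine ⟨g, fun f hf => ?_⟩
  have : ∀ t, g t = f t := fun t =>
    congrFun hg ⟨(f, t), hf⟩
  exact (funext this).symm
end

section
/- Let F be a sheaf of sets on a topological space X. Assume Zorn's lemma. If for every open U and every section s ∈ F(U) there is an open covering X = ⋃ᵢ Uᵢ such that for each i the section s extends to U ∪ Uᵢ, then every section of F over any open extends to a global section (i.e., F is flabby in the traditional sense). -/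
open TopologicalSpace CategoryTheory Opposite

lemma res_res15 {X : TopCat.{u}} (F : TopCat.Presheaf (Type u) X) {a b c : Opens X}
    (h1 : a ≤ b) (h2 : b ≤ c) (x : F.obj (op c)) :
    F.map (homOfLE h1).op (F.map (homOfLE h2).op x)
      = F.map (homOfLE (h1.trans h2)).op x := by
  rw [← FunctorToTypes.map_comp_apply]
  rfl

theorem stmt15 {X : TopCat.{u}} (F : TopCat.Sheaf (Type u) X)
    (h : ∀ (U : Opens X) (s : F.val.obj (op U)),
      ∃ (ι : Type u) (V : ι → Opens X), iSup V = ⊤ ∧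
        ∀ i : ι, ∃ t : F.val.obj (op (U ⊔ V i)),
          F.val.map (homOfLE le_sup_left).op t = s) :
    ∀ (U : Opens X) (s : F.val.obj (op U)),
      ∃ t : F.val.obj (op ⊤), F.val.map (homOfLE le_top).op t = s := by
  intro U s
  letI : Preorder (Σ V : Opens X, F.val.obj (op V)) :=
    { le := fun p q => ∃ hle : p.1 ≤ q.1, F.val.map (homOfLE hle).op q.2 = p.2
      le_refl := fun p => ⟨le_rfl, by
        have : (homOfLE (le_refl p.1)) = 𝟙 p.1 := rfl
        rw [this, op_id, F.val.map_id]; rfl⟩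
      le_trans := fun p q r ⟨h1, e1⟩ ⟨h2, e2⟩ =>
        ⟨h1.trans h2, by rw [← e2, res_res15] at e1; exact e1⟩ }
  set S : Set (Σ V : Opens X, F.val.obj (op V)) :=
    {p | ∃ hle : U ≤ p.1, F.val.map (homOfLE hle).op p.2 = s} with hS
  have hbound : ∀ c ⊆ S, IsChain (· ≤ ·) c → ∃ ub ∈ S, ∀ z ∈ c, z ≤ ub := by
    intro c hcS hc
    classical
    let V : Option c → Opens X := fun i => match i with
      | none => U
      | some p => p.1.1
    let sf : ∀ i, F.val.obj (op (V i)) := fun i => match i with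
      | none => s
      | some p => p.1.2
    have key : ∀ (i j : Option c) (hij : V i ≤ V j),
        F.val.map (homOfLE hij).op (sf j) = sf i → ∀ (W : Opens X)
        (h1 : W ≤ V i) (h2 : W ≤ V j),
        F.val.map (homOfLE h1).op (sf i) = F.val.map (homOfLE h2).op (sf j) := by
      intro i j hij hres W h1 h2
      rw [← hres, res_res15]
    have hcomp : TopCat.Presheaf.IsCompatible F.val V sf := by
      intro i j
      rcases i with _ | p <;> rcases j with _ | q
      · rfl
      · obtain ⟨hle, hres⟩ := hcS q.2
        exact (key none (some q) hle hres _ inf_le_left inf_le_right)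
      · obtain ⟨hle, hres⟩ := hcS p.2
        exact (key none (some p) hle hres _ inf_le_right inf_le_left).symm
      · rcases eq_or_ne p.1 q.1 with heq | hne
        · have : p = q := Subtype.ext heq
          subst this
          rfl
        · rcases hc.total p.2 q.2 with hpq | hqp
          · obtain ⟨hle, hres⟩ := hpq
            exact key (some p) (some q) hle hres _ inf_le_left inf_le_right
          · obtain ⟨hle, hres⟩ := hqp
            exact (key (some q) (some p) hle hres _ inf_le_right inf_le_left).symm
    obtain ⟨t, ht, -⟩ := F.existsUnique_gluing V sf hcomp
    refine ⟨⟨iSup V, t⟩, ⟨le_iSup V none, ht none⟩, ?_⟩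
    intro p hp
    exact ⟨le_iSup V (some ⟨p, hp⟩), ht (some ⟨p, hp⟩)⟩
  obtain ⟨m, hmS, hmax⟩ := zorn_le₀ S hbound
  obtain ⟨hUm, hres⟩ := hmS
  obtain ⟨ι', V', hcov, ht⟩ := h m.1 m.2
  have htop : (⊤ : Opens X) ≤ m.1 := by
    intro x _
    have hx : x ∈ iSup V' := by rw [hcov]; trivial
    obtain ⟨i, hxi⟩ := Opens.mem_iSup.mp hx
    obtain ⟨t, htres⟩ := ht i
    have hq : (⟨m.1 ⊔ V' i, t⟩ : Σ V : Opens X, F.val.obj (op V)) ∈ S := by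
      refine ⟨hUm.trans le_sup_left, ?_⟩
      have := res_res15 F.val hUm (le_sup_left : m.1 ≤ m.1 ⊔ V' i) t
      rw [htres] at this
      exact this.symm ▸ hres
    have hmq : m ≤ ⟨m.1 ⊔ V' i, t⟩ := ⟨le_sup_left, htres⟩
    obtain ⟨hle, -⟩ := hmax hq hmq
    exact hle (le_sup_right (a := m.1) hxi)
  refine ⟨F.val.map (homOfLE htop).op m.2, ?_⟩
  rw [res_res15]
  exact hres
end

section
/- Let 0 → M' → M → M'' → 0 be a short exact sequence of sheaves of abelian groups on a topological space X, with M' flabby (in the traditional sense: all restrictions M'(X) → M'(U) are surjective). Assuming Zorn's lemma, the induced sequence of global sections 0 → M'(X) → M(X) → M''(X) → 0 is exact. -/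
/-!
The stalkwise hypotheses say exactly that `0 → M' → M → M'' → 0` is a short exact sequence in the
abelian category of sheaves, and flabbiness of `M'` over `X` implies flabbiness for every
restriction `M'(V) → M'(U)`, since `M'(X) → M'(U)` factors through it. Global sections are left
exact. For right exactness one takes, by Zorn's lemma, a maximal local lift of a section of `M''`;
near a point outside its domain there is another local lift, and the two differ on the overlap by
a section of `M'`, which extends to the second domain by flabbiness, so the lifts can be glued.
-/

open TopologicalSpace CategoryTheory Opposite

namespace TopCat.Sheaf

variable {X : TopCat.{u}} {M' M M'' : Sheaf AddCommGrpCat.{u} X}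

theorem comp_eq_zero_of_stalkFunctor_map (i : M' ⟶ M) (p : M ⟶ M'')
    (h : ∀ (x : X) (m' : (Presheaf.stalkFunctor AddCommGrpCat.{u} x).obj M'.obj),
      (Presheaf.stalkFunctor AddCommGrpCat.{u} x).map p.hom
        ((Presheaf.stalkFunctor AddCommGrpCat.{u} x).map i.hom m') = 0) :
    i ≫ p = 0 := by
  apply CategoryTheory.Sheaf.hom_ext
  ext U s
  refine Presheaf.section_ext M'' U.unop _ _ fun x hx => ?_
  change M''.presheaf.germ U.unop x hx (p.hom.app U (i.hom.app U s)) =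
    M''.presheaf.germ U.unop x hx 0
  rw [map_zero, ← Presheaf.stalkFunctor_map_germ_apply U.unop x hx p.hom,
    ← Presheaf.stalkFunctor_map_germ_apply U.unop x hx i.hom]
  exact h x _

theorem shortExact_of_stalkFunctor_map (i : M' ⟶ M) (p : M ⟶ M'') (w : i ≫ p = 0)
    (hi : ∀ x : X, Function.Injective ((Presheaf.stalkFunctor AddCommGrpCat.{u} x).map i.hom))
    (hp : ∀ x : X, Function.Surjective ((Presheaf.stalkFunctor AddCommGrpCat.{u} x).map p.hom))
    (hexact : ∀ (x : X) (m : (Presheaf.stalkFunctor AddCommGrpCat.{u} x).obj M.obj),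
      (Presheaf.stalkFunctor AddCommGrpCat.{u} x).map p.hom m = 0 →
        ∃ m', (Presheaf.stalkFunctor AddCommGrpCat.{u} x).map i.hom m' = m) :
    (ShortComplex.mk i p w).ShortExact where
  exact := by
    rw [exact_iff_stalkFunctor_map_exact]
    intro x
    rw [ShortComplex.ab_exact_iff]
    exact hexact x
  mono_f := by
    rw [Presheaf.mono_iff_stalk_mono]
    exact fun x => (AddCommGrpCat.mono_iff_injective _).2 (hi x)
  epi_g := by
    rw [← isLocallySurjective_iff_epi, Presheaf.locally_surjective_iff_surjective_on_stalks]
    exact hp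

theorem isFlasque_of_surjective_map_top (F : Sheaf AddCommGrpCat.{u} X)
    (h : ∀ U : Opens X, Function.Surjective (F.obj.map (homOfLE (le_top : U ≤ ⊤)).op)) :
    F.IsFlasque where
  epi {U V} r := by
    rw [AddCommGrpCat.epi_iff_surjective]
    refine Function.Surjective.of_comp (g := F.obj.map (homOfLE le_top).op) ?_
    rw [← ConcreteCategory.coe_comp, ← F.obj.map_comp]
    exact h V.unop

end TopCat.Sheaf

theorem stmt17 {X : TopCat.{u}} (M' M M'' : TopCat.Sheaf AddCommGrpCat.{u} X)
    (i : M' ⟶ M) (p : M ⟶ M'')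
    (hstalk_i : ∀ x : X,
      Function.Injective ((TopCat.Presheaf.stalkFunctor AddCommGrpCat.{u} x).map i.hom))
    (hstalk_p : ∀ x : X,
      Function.Surjective ((TopCat.Presheaf.stalkFunctor AddCommGrpCat.{u} x).map p.hom))
    (hstalk_exact : ∀ (x : X)
      (m : (TopCat.Presheaf.stalkFunctor AddCommGrpCat.{u} x).obj M.obj),
      ((TopCat.Presheaf.stalkFunctor AddCommGrpCat.{u} x).map p.hom) m = 0 ↔
        ∃ m', ((TopCat.Presheaf.stalkFunctor AddCommGrpCat.{u} x).map i.hom) m' = m)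
    (hflabby : ∀ U : Opens X, Function.Surjective
      (M'.obj.map (homOfLE (le_top : U ≤ ⊤)).op)) :
    Function.Injective (i.hom.app (op ⊤)) ∧
    (∀ m : M.obj.obj (op ⊤),
      (p.hom.app (op ⊤)) m = 0 ↔ ∃ m', (i.hom.app (op ⊤)) m' = m) ∧
    Function.Surjective (p.hom.app (op ⊤)) := by
  have hw : i ≫ p = 0 := TopCat.Sheaf.comp_eq_zero_of_stalkFunctor_map i p
    fun x m' => (hstalk_exact x _).2 ⟨m', rfl⟩
  have hS := TopCat.Sheaf.shortExact_of_stalkFunctor_map i p hw hstalk_i hstalk_p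
    fun x m => (hstalk_exact x m).1
  have := TopCat.Sheaf.isFlasque_of_surjective_map_top M' hflabby
  refine ⟨TopCat.Presheaf.app_injective_of_stalkFunctor_map_injective i.hom ⊤
      fun x _ => hstalk_i x,
    fun m => ⟨TopCat.Sheaf.sections_exact_of_left_exact hS.exact hS.mono_f m, ?_⟩,
    (AddCommGrpCat.epi_iff_surjective _).1 (TopCat.Sheaf.IsFlasque.epi_of_shortExact hS)⟩
  rintro ⟨m', rfl⟩
  exact congr($(hw).hom.app (op ⊤) m')
end
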